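/- If G is a graph with γ_g'(G) = 2, then for every edge e of G, γ_g'(G−e) ≤ 3. -/

import Mathlib

/-!
If `γ_g'(G) ≤ 2`, then whatever vertex `v` Staller opens with, Dominator has a reply `u` with
`N[v] ∪ N[u] = V`. Deleting an edge `e` destroys this only at an endpoint of `e` lying outside
`{v, u}` whose other endpoint is in `{v, u}`, so at most one vertex stays undominated, and one more
move ends the game on `G − e`: Staller's opening, Dominator's reply `u`, and a last move.
-/

open Classical

noncomputable section

namespace DomGame

variable {V : Type*} [Fintype V]

/-- Closed neighborhood of `v` as a `Finset`. -/
noncomputable def N (G : SimpleGraph V) (v : V) : Finset V :=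
  Finset.univ.filter (fun u => G.Adj v u ∨ u = v)

/-- Legal moves given the set `S` of already dominated vertices. -/
noncomputable def moves (G : SimpleGraph V) (S : Finset V) : Finset V :=
  Finset.univ.filter (fun v => ¬ N G v ⊆ S)

lemma card_lt {G : SimpleGraph V} {S : Finset V} (v : V) (hv : v ∈ moves G S) :
    (Finset.univ \ (S ∪ N G v)).card < (Finset.univ \ S).card := by
  simp only [moves, Finset.mem_filter] at hv
  obtain ⟨u, hu, hus⟩ := Finset.not_subset.mp hv.2
  apply Finset.card_lt_card
  refine ⟨Finset.sdiff_subset_sdiff (le_refl _) Finset.subset_union_left, ?_⟩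
  intro hsub
  have := hsub (Finset.mem_sdiff.mpr ⟨Finset.mem_univ u, hus⟩)
  rw [Finset.mem_sdiff, Finset.mem_union] at this
  exact this.2 (Or.inr hu)

mutual
/-- Number of moves with optimal play when it is Dominator's turn and
`S` is the set of already dominated vertices. -/
noncomputable def gameD (G : SimpleGraph V) (S : Finset V) : ℕ :=
  if h : (moves G S).Nonempty then
    1 + (moves G S).attach.inf' (by simpa using h)
      (fun v => gameS G (S ∪ N G v.1))
  else 0
termination_by (Finset.univ \ S).card
decreasing_by exact card_lt v.1 v.2

/-- Number of moves with optimal play when it is Staller's turn. -/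
noncomputable def gameS (G : SimpleGraph V) (S : Finset V) : ℕ :=
  if h : (moves G S).Nonempty then
    1 + (moves G S).attach.sup' (by simpa using h)
      (fun v => gameD G (S ∪ N G v.1))
  else 0
termination_by (Finset.univ \ S).card
decreasing_by exact card_lt v.1 v.2
end

/-- The (Dominator-start) game domination number. -/
noncomputable def gammaG (G : SimpleGraph V) : ℕ := gameD G ∅

/-- The Staller-start game domination number. -/
noncomputable def gammaG' (G : SimpleGraph V) : ℕ := gameS G ∅

end DomGame

namespace DomGame

variable {V : Type*} [Fintype V] {G : SimpleGraph V} {S : Finset V}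

open Finset

lemma mem_N_self (G : SimpleGraph V) (v : V) : v ∈ N G v := by simp [N]

lemma mem_moves_iff {v : V} : v ∈ moves G S ↔ ¬ N G v ⊆ S := by simp [moves]

lemma moves_nonempty_iff : (moves G S).Nonempty ↔ S ≠ univ := by
  constructor
  · rintro ⟨v, hv⟩ rfl
    exact mem_moves_iff.mp hv (subset_univ _)
  · intro hS
    obtain ⟨v, -, hv⟩ := exists_of_ssubset (ssubset_univ_iff.mpr hS)
    exact ⟨v, mem_moves_iff.mpr fun h => hv (h (mem_N_self G v))⟩

lemma gameS_univ : gameS G univ = 0 := by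
  rw [gameS, dif_neg (by simp [moves_nonempty_iff])]

lemma gameD_univ : gameD G univ = 0 := by
  rw [gameD, dif_neg (by simp [moves_nonempty_iff])]

lemma gameS_eq_zero_iff : gameS G S = 0 ↔ S = univ := by
  refine ⟨fun h => ?_, fun h => h ▸ gameS_univ⟩
  by_contra hS
  rw [gameS, dif_pos (moves_nonempty_iff.mpr hS)] at h
  omega

lemma gameD_lt_gameS {v : V} (hv : v ∈ moves G S) : gameD G (S ∪ N G v) < gameS G S := by
  rw [gameS, dif_pos ⟨v, hv⟩]
  have : gameD G (S ∪ N G v) ≤ _ :=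
    le_sup' (fun w : moves G S => gameD G (S ∪ N G w)) (mem_attach _ ⟨v, hv⟩)
  omega

lemma gameS_le_succ {k : ℕ} (h : ∀ v ∈ moves G S, gameD G (S ∪ N G v) ≤ k) :
    gameS G S ≤ k + 1 := by
  rw [gameS]
  split_ifs with hS
  · have := sup'_le (attach_nonempty_iff.mpr hS) (fun w : moves G S => gameD G (S ∪ N G w))
      fun w _ => h w w.2
    omega
  · omega

lemma gameD_le_succ_gameS {v : V} (hv : v ∈ moves G S) :
    gameD G S ≤ gameS G (S ∪ N G v) + 1 := by
  rw [gameD, dif_pos ⟨v, hv⟩]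
  have : _ ≤ gameS G (S ∪ N G v) :=
    inf'_le (fun w : moves G S => gameS G (S ∪ N G w)) (mem_attach _ ⟨v, hv⟩)
  omega

lemma exists_gameS_lt_gameD (hS : S ≠ univ) :
    ∃ v ∈ moves G S, gameS G (S ∪ N G v) < gameD G S := by
  have hne : (moves G S).Nonempty := moves_nonempty_iff.mpr hS
  obtain ⟨v, -, hv⟩ := exists_mem_eq_inf' (s := (moves G S).attach) (by simpa using hne)
    (fun w => gameS G (S ∪ N G w))
  refine ⟨v, v.2, ?_⟩
  rw [gameD, dif_pos hne, hv]
  omega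

/-- Each move dominates a new vertex. -/
lemma gameS_le_and_gameD_le_of_card_compl_le {n : ℕ} (h : #(univ \ S) ≤ n) :
    gameS G S ≤ n ∧ gameD G S ≤ n := by
  induction n generalizing S with
  | zero =>
    have hS : S = univ := by simpa [sdiff_eq_empty_iff_subset] using h
    simp [hS, gameS_univ, gameD_univ]
  | succ n ih =>
    have hmove {v : V} (hv : v ∈ moves G S) :
        gameS G (S ∪ N G v) ≤ n ∧ gameD G (S ∪ N G v) ≤ n :=
      ih (by have := card_lt v hv; omega)
    by_cases hS : S = univ
    · simp [hS, gameS_univ, gameD_univ]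
    obtain ⟨v, hv⟩ := moves_nonempty_iff.mpr hS
    exact ⟨gameS_le_succ fun w hw => (hmove hw).2,
      (gameD_le_succ_gameS hv).trans (Nat.succ_le_succ (hmove hv).1)⟩

lemma gameD_le_card_compl_union_succ (u : V) :
    gameD G S ≤ #(univ \ (S ∪ N G u)) + 1 := by
  by_cases hu : u ∈ moves G S
  · exact (gameD_le_succ_gameS hu).trans
      (Nat.succ_le_succ (gameS_le_and_gameD_le_of_card_compl_le (G := G) le_rfl).1)
  · rw [union_eq_left.mpr (by simpa [mem_moves_iff] using hu)]
    exact (gameS_le_and_gameD_le_of_card_compl_le le_rfl).2.trans (Nat.le_succ _)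

lemma exists_union_N_eq_univ_of_gameD_le_one [Nonempty V] (h : gameD G S ≤ 1) :
    ∃ u, S ∪ N G u = univ := by
  by_cases hS : S = univ
  · exact ⟨Classical.arbitrary V, by simp [hS]⟩
  · obtain ⟨u, -, hu⟩ := exists_gameS_lt_gameD (G := G) hS
    exact ⟨u, (gameS_eq_zero_iff (G := G)).mp (by omega)⟩

lemma exists_N_union_N_eq_univ (hG : gammaG' G ≤ 2) (v : V) :
    ∃ u, N G v ∪ N G u = univ := by
  have hv : v ∈ moves G ∅ := mem_moves_iff.mpr fun h => by simpa using h (mem_N_self G v)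
  have := gameD_lt_gameS hv
  rw [empty_union] at this
  have : Nonempty V := ⟨v⟩
  exact exists_union_N_eq_univ_of_gameD_le_one (by unfold gammaG' at hG; omega)

lemma eq_of_mem_N_of_notMem_N_deleteEdges {e : Sym2 V} {w x : V} (hx : x ∈ N G w)
    (hx' : x ∉ N (G.deleteEdges {e}) w) : s(w, x) = e := by
  simp only [N, mem_filter, mem_univ, true_and, SimpleGraph.deleteEdges_adj,
    Set.mem_singleton_iff, not_or, not_and, not_not] at hx hx'
  exact hx'.1 (hx.resolve_right hx'.2)

/-- A vertex left undominated by `D` is an endpoint of `e` outside `D` whose other endpoint lies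
in `D`; of two distinct endpoints, at most one can be outside `D` with the other inside. -/
lemma card_compl_biUnion_N_deleteEdges_le_one {D : Finset V} (hD : D.biUnion (N G) = univ)
    (e : Sym2 V) : #(univ \ D.biUnion (N (G.deleteEdges {e}))) ≤ 1 := by
  have hundominated {x : V} (hx : x ∉ D.biUnion (N (G.deleteEdges {e}))) :
      x ∉ D ∧ ∃ w ∈ D, s(w, x) = e := by
    obtain ⟨w, hw, hxw⟩ := mem_biUnion.mp (hD ▸ mem_univ x)
    refine ⟨fun hxD => hx (mem_biUnion.mpr ⟨x, hxD, mem_N_self _ x⟩), w, hw, ?_⟩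
    exact eq_of_mem_N_of_notMem_N_deleteEdges hxw fun h => hx (mem_biUnion.mpr ⟨w, hw, h⟩)
  refine card_le_one.mpr fun x hx y hy => ?_
  obtain ⟨-, w, hw, rfl⟩ := hundominated (mem_sdiff.mp hx).2
  obtain ⟨hyD, _, -, hedge⟩ := hundominated (mem_sdiff.mp hy).2
  rcases Sym2.eq_iff.mp hedge with ⟨-, hyx⟩ | ⟨-, hyw⟩
  · exact hyx.symm
  · exact absurd (hyw ▸ hw) hyD

end DomGame

open DomGame in
/-- If `γ_g'(G) = 2`, then `γ_g'(G−e) ≤ 3` for every edge `e`. -/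
theorem gameS_two_edge_removal {V : Type*} [Fintype V] (G : SimpleGraph V)
    (hG : gammaG' G = 2) (e : Sym2 V) (he : e ∈ G.edgeSet) :
    gammaG' (G.deleteEdges {e}) ≤ 3 := by
  refine gameS_le_succ fun v _ => ?_
  obtain ⟨u, hu⟩ := exists_N_union_N_eq_univ hG.le v
  have hcover := card_compl_biUnion_N_deleteEdges_le_one (G := G) (D := {v, u})
    (by rwa [Finset.biUnion_insert, Finset.singleton_biUnion]) e
  rw [Finset.biUnion_insert, Finset.singleton_biUnion] at hcover
  have hreply := gameD_le_card_compl_union_succ (G := G.deleteEdges {e})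
    (S := N (G.deleteEdges {e}) v) u
  rw [Finset.empty_union]
  omega
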